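/- arXiv:2512.09181 — 2 statements merged into one kernel-verified Lean document; each statement's English description precedes it below -/
import Mathlib

section
/- Let F be a field in which 2 ≠ 0 (characteristic different from 2). Then there is no injective map φ from the point set of the Fano plane ℙ²(𝔽₂) = Projectivization 𝔽₂ (Fin 3 → 𝔽₂) to the projective plane ℙ²(F) = Projectivization F (Fin 3 → F) such that for all points p, q, r of ℙ²(𝔽₂): p, q, r are collinear if and only if φ(p), φ(q), φ(r) are collinear. In particular (taking F = ℂ), no configuration of points and lines in ℂP² realizes the combinatorial type of the Fano arrangement of seven lines meeting at seven triple points. -/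
/-!
Over any field, collinearity of three points is the vanishing of the determinant of their
representatives. Since the images `a, b, c` of three non-collinear Fano points form a basis of
`F³`, one may take them to be the coordinate vectors. Write `g = (g₀, g₁, g₂)` for the image of
the seventh point; `g₀ g₁ g₂ ≠ 0` since `g` lies on no side of the triangle `abc`. The Fano lines
`abd, cdg`, `ace, beg` and `bcf, afg` force `d ∝ (g₀, g₁, 0)`, `e ∝ (g₀, 0, g₂)` and
`f ∝ (0, g₁, g₂)`, and the determinant of these three vectors is `-2 g₀ g₁ g₂`. So the last Fano
line `def` can only be realized when `2 = 0`.
-/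

noncomputable section

/-- Three points of a projective plane `ℙ²(K)` are collinear if the span of their
representative lines has dimension at most `2`, i.e. they lie on a common projective line. -/
def Collinear3 (K : Type*) [Field K] (p q r : Projectivization K (Fin 3 → K)) : Prop :=
  Module.finrank K ↥(p.submodule ⊔ q.submodule ⊔ r.submodule) ≤ 2

open Matrix Projectivization

theorem collinear3_mk_iff {K : Type*} [Field K] {u v w : Fin 3 → K} (hu : u ≠ 0) (hv : v ≠ 0)
    (hw : w ≠ 0) :
    Collinear3 K (mk K u hu) (mk K v hv) (mk K w hw) ↔ det (of ![u, v, w]) = 0 := by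
  have hspan : (mk K u hu).submodule ⊔ (mk K v hv).submodule ⊔ (mk K w hw).submodule =
      Submodule.span K (Set.range ![u, v, w]) := by
    simp only [submodule_mk, Matrix.range_cons, Matrix.range_empty, Set.union_empty,
      Set.singleton_union, Submodule.span_insert, sup_assoc]
  rw [Collinear3, hspan, ← not_iff_not, ← Ne, ← isUnit_iff_ne_zero, ← isUnit_iff_isUnit_det,
    ← linearIndependent_rows_iff_isUnit, linearIndependent_iff_card_eq_finrank_span]
  have hle : Module.finrank K (Submodule.span K (Set.range ![u, v, w])) ≤ 3 :=
    finrank_range_le_card (R := K) ![u, v, w]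
  change _ ↔ 3 = Module.finrank K (Submodule.span K (Set.range ![u, v, w]))
  omega

theorem collinear3_iff_det_rep {K : Type*} [Field K] (p q r : Projectivization K (Fin 3 → K)) :
    Collinear3 K p q r ↔ det (of ![p.rep, q.rep, r.rep]) = 0 := by
  rw [← collinear3_mk_iff p.rep_nonzero q.rep_nonzero r.rep_nonzero, mk_rep, mk_rep, mk_rep]

theorem det_of_vecMul {R : Type*} [CommRing R] (x y z : Fin 3 → R)
    (M : Matrix (Fin 3) (Fin 3) R) :
    det (of ![x ᵥ* M, y ᵥ* M, z ᵥ* M]) = det (of ![x, y, z]) * det M := by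
  rw [← det_mul]
  congr 1
  ext i j
  fin_cases i <;> rfl

theorem two_eq_zero_of_fano {K : Type*} [Field K] {a b c d e f g : Fin 3 → K}
    (habd : det (of ![a, b, d]) = 0) (hace : det (of ![a, c, e]) = 0)
    (hbcf : det (of ![b, c, f]) = 0) (hdef : det (of ![d, e, f]) = 0)
    (hcdg : det (of ![c, d, g]) = 0) (hbeg : det (of ![b, e, g]) = 0)
    (hafg : det (of ![a, f, g]) = 0)
    (habc : det (of ![a, b, c]) ≠ 0) (habg : det (of ![a, b, g]) ≠ 0)
    (hbcd : det (of ![b, c, d]) ≠ 0) (hbce : det (of ![b, c, e]) ≠ 0)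
    (hacf : det (of ![a, c, f]) ≠ 0) : (2 : K) = 0 := by
  set Q := of ![a, b, c] with hQ
  have hsurj := vecMul_surjective_iff_isUnit.2 ((isUnit_iff_isUnit_det Q).2 habc.isUnit)
  obtain ⟨d, rfl⟩ := hsurj d
  obtain ⟨e, rfl⟩ := hsurj e
  obtain ⟨f, rfl⟩ := hsurj f
  obtain ⟨g, rfl⟩ := hsurj g
  have ha : a = ![1, 0, 0] ᵥ* Q := by ext j; simp [hQ, vecMul, dotProduct, Fin.sum_univ_three]
  have hb : b = ![0, 1, 0] ᵥ* Q := by ext j; simp [hQ, vecMul, dotProduct, Fin.sum_univ_three]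
  have hc : c = ![0, 0, 1] ᵥ* Q := by ext j; simp [hQ, vecMul, dotProduct, Fin.sum_univ_three]
  simp only [ha, hb, hc, det_of_vecMul, mul_eq_zero, ne_eq, habc, or_false]
    at habd hace hbcf hdef hcdg hbeg hafg habg hbcd hbce hacf
  simp only [det_fin_three, of_apply, cons_val', cons_val_zero, cons_val_one, cons_val,
    cons_val_fin_one, mul_one, one_mul, mul_zero, zero_mul, sub_zero, add_zero, zero_sub,
    neg_eq_zero, sub_self, zero_add] at habd hace hbcf hdef hcdg hbeg hafg habg hbcd hbce hacf
  have key : 2 * (d 0 * e 0 * f 1 * g 2) = 0 := by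
    linear_combination -g 0 * hdef - d 0 * f 1 * hbeg + e 0 * f 2 * hcdg + d 0 * e 0 * hafg
      + g 0 * (d 0 * f 2 - d 2 * f 0) * hace + g 0 * d 1 * e 2 * hbcf + g 0 * e 0 * f 1 * habd
  simpa [hbcd, hbce, hacf, habg] using key

theorem stmt4 (F : Type*) [Field F] (h2 : (2 : F) ≠ 0) :
    ¬ ∃ φ : Projectivization (ZMod 2) (Fin 3 → ZMod 2) → Projectivization F (Fin 3 → F),
        Function.Injective φ ∧
        ∀ p q r, Collinear3 (ZMod 2) p q r ↔ Collinear3 F (φ p) (φ q) (φ r) := by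
  rintro ⟨φ, -, hφ⟩
  have transfer : ∀ {u v w : Fin 3 → ZMod 2} (hu : u ≠ 0) (hv : v ≠ 0) (hw : w ≠ 0),
      det (of ![u, v, w]) = 0 ↔
        det (of ![(φ (mk _ u hu)).rep, (φ (mk _ v hv)).rep, (φ (mk _ w hw)).rep]) = 0 :=
    fun hu hv hw => by rw [← collinear3_mk_iff, hφ, collinear3_iff_det_rep]
  refine h2 (two_eq_zero_of_fano (a := (φ (mk _ ![1, 0, 0] (by decide))).rep)
    (b := (φ (mk _ ![0, 1, 0] (by decide))).rep) (c := (φ (mk _ ![0, 0, 1] (by decide))).rep)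
    (d := (φ (mk _ ![1, 1, 0] (by decide))).rep) (e := (φ (mk _ ![1, 0, 1] (by decide))).rep)
    (f := (φ (mk _ ![0, 1, 1] (by decide))).rep) (g := (φ (mk _ ![1, 1, 1] (by decide))).rep)
    ?_ ?_ ?_ ?_ ?_ ?_ ?_ ?_ ?_ ?_ ?_ ?_)
  all_goals first
    | exact (transfer _ _ _).1 (by decide)
    | exact mt (transfer _ _ _).2 (by decide)
end
end

section
/- Let M be the 4×8 integer matrix with rows (1,−1,−1,−1,0,0,0,0), (1,−1,0,0,−1,−1,0,0), (1,0,−1,0,−1,0,0,−1), (1,0,0,−1,0,−1,0,−1). Then the cokernel of the ℤ-linear map ℤ⁸ → ℤ⁴ given by x ↦ M·x (equivalently, the quotient of ℤ⁴ by the span of the columns of M) is isomorphic as an abelian group to ℤ/2ℤ. (This is the computation showing that H₁ of the complement of the four blue spheres F₁ ∪ ⋯ ∪ F₄ in ℂP² # 7(ℂP²-bar) is ℤ/2ℤ, in the branched double cover proof of the non-realizability of the Fano arrangement.) -/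
/-!
Up to sign, the nonzero columns of `M` other than `(1,1,1,1)` are the six vectors `eᵢ + eⱼ`
(`i < j`), so the column span is the lattice `D₄` of integer vectors with even coordinate sum.
The coordinate sum mod 2 is therefore a surjection `ℤ⁴ → ℤ/2` whose kernel is exactly
the range of `M`.
-/

noncomputable section

/-- The intersection matrix of the four blue spheres `F₁, …, F₄` in the basis
`h, e₁, …, e₇` of `H₂(ℂP² # 7 ℂP²-bar)`. -/
def M : Matrix (Fin 4) (Fin 8) ℤ :=
  !![1, -1, -1, -1,  0,  0, 0,  0;
     1, -1,  0,  0, -1, -1, 0,  0;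
     1,  0, -1,  0, -1,  0, 0, -1;
     1,  0,  0, -1,  0, -1, 0, -1]

def coordSumMod (ι : Type*) [Fintype ι] (m : ℕ) : (ι → ℤ) →ₗ[ℤ] ZMod m :=
  (Int.castAddHom (ZMod m)).toIntLinearMap ∘ₗ ∑ i, LinearMap.proj i

@[simp]
theorem coordSumMod_apply {ι : Type*} [Fintype ι] (m : ℕ) (v : ι → ℤ) :
    coordSumMod ι m v = ((∑ i, v i : ℤ) : ZMod m) := by
  simp [coordSumMod]

theorem coordSumMod_surjective (ι : Type*) [Fintype ι] [DecidableEq ι] [Nonempty ι] (m : ℕ) :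
    Function.Surjective (coordSumMod ι m) := by
  intro z
  obtain ⟨k, rfl⟩ := ZMod.intCast_surjective z
  exact ⟨Pi.single (Classical.arbitrary ι) k, by simp⟩

open Matrix in
theorem M_mulVec (x : Fin 8 → ℤ) :
    M *ᵥ x = ![x 0 - x 1 - x 2 - x 3, x 0 - x 1 - x 4 - x 5,
      x 0 - x 2 - x 4 - x 7, x 0 - x 3 - x 5 - x 7] := by
  ext i
  fin_cases i <;> simp [M, mulVec, dotProduct, Fin.sum_univ_eight] <;> ring

theorem range_mulVecLin_M :
    LinearMap.range M.mulVecLin = LinearMap.ker (coordSumMod (Fin 4) 2) := by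
  apply le_antisymm
  · rw [Matrix.range_mulVecLin, Submodule.span_le]
    rintro _ ⟨j, rfl⟩
    fin_cases j <;> simp [M, Fin.sum_univ_four] <;> decide
  · intro v hv
    rw [LinearMap.mem_ker, coordSumMod_apply, Fin.sum_univ_four,
      ZMod.intCast_zmod_eq_zero_iff_dvd] at hv
    obtain ⟨t, ht⟩ := hv
    -- With `x₀ = x₅ = x₆ = x₇ = 0` the system is triangular in `x₁, …, x₄`;
    -- the first row is solvable because `v 0 + v 1 + v 2 + v 3 = 2 * t`.
    set s : ℤ := t - v 1 - v 2 - v 3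
    refine ⟨![0, -v 1 - s, -v 2 - s, -v 3, s, 0, 0, 0], ?_⟩
    rw [Matrix.mulVecLin_apply, M_mulVec]
    ext i
    fin_cases i <;> simp
    omega

theorem stmt11 :
    Nonempty (((Fin 4 → ℤ) ⧸ LinearMap.range M.mulVecLin) ≃+ ZMod 2) :=
  ⟨((Submodule.quotEquivOfEq _ _ range_mulVecLin_M).trans
    ((coordSumMod (Fin 4) 2).quotKerEquivOfSurjective (coordSumMod_surjective _ _))).toAddEquiv⟩
end
end
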